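/- arXiv:1410.1656 — 2 statements merged into one kernel-verified Lean document; each statement's English description precedes it below -/
import Mathlib

section
/- Let $U:\mathbb{R}\to\mathbb{R}$ be smooth with $U'(x_0)=0$, $U''(x_0)>0$. Then for all sufficiently small $\delta>0$, $\int_0^\delta \frac{t}{\varepsilon}(-U'(x_0-t))e^{-(U(x_0-t)-U(x_0))/\varepsilon}\,dt = \sqrt{\pi\varepsilon/(2U''(x_0))}(1+o(1))$ as $\varepsilon\to 0^+$. -/
open MeasureTheory Filter Real Set


lemma aux_ftc (V : ℝ → ℝ) (hV : ContDiff ℝ ((⊤:ℕ∞) : WithTop ℕ∞) V) (hV0 : V 0 = 0)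
    (hV1 : deriv V 0 = 0) :
    (∀ s : ℝ, deriv V s = ∫ u in (0:ℝ)..s, deriv (deriv V) u) ∧
    (∀ t : ℝ, V t = ∫ s in (0:ℝ)..t, deriv V s) := by
  have hV' : Differentiable ℝ V := hV.differentiable (by simp)
  have hVd : ContDiff ℝ ((⊤:ℕ∞) : WithTop ℕ∞) (deriv V) := (contDiff_infty_iff_deriv.mp hV).2
  have hVd' : Differentiable ℝ (deriv V) := hVd.differentiable (by simp)
  have hVddc : Continuous (deriv (deriv V)) := (contDiff_infty_iff_deriv.mp hVd).2.continuous
  constructor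
  · intro s
    rw [intervalIntegral.integral_deriv_eq_sub (fun u _ => hVd'.differentiableAt)
      (hVddc.intervalIntegrable _ _), hV1, sub_zero]
  · intro t
    rw [intervalIntegral.integral_deriv_eq_sub (fun u _ => hV'.differentiableAt)
      ((hVd.continuous).intervalIntegrable _ _), hV0, sub_zero]

lemma aux_quad_lb (V : ℝ → ℝ) (hV : ContDiff ℝ ((⊤:ℕ∞) : WithTop ℕ∞) V) (hV0 : V 0 = 0)
    (hV1 : deriv V 0 = 0) (c t : ℝ) (ht : 0 ≤ t)
    (hlb : ∀ u ∈ Icc 0 t, c ≤ deriv (deriv V) u) :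
    c * t ^ 2 / 2 ≤ V t := by
  have hVd : ContDiff ℝ ((⊤:ℕ∞) : WithTop ℕ∞) (deriv V) := (contDiff_infty_iff_deriv.mp hV).2
  have hVddc : Continuous (deriv (deriv V)) := (contDiff_infty_iff_deriv.mp hVd).2.continuous
  have hic : Continuous (deriv V) := hVd.continuous
  obtain ⟨hftc1, hftc0⟩ := aux_ftc V hV hV0 hV1
  have hbd1 : ∀ s ∈ Icc (0:ℝ) t, c * s ≤ deriv V s := by
    intro s hs
    calc c * s = ∫ _ in (0:ℝ)..s, c := by simp [mul_comm]
      _ ≤ ∫ u in (0:ℝ)..s, deriv (deriv V) u := by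
          apply intervalIntegral.integral_mono_on hs.1 (intervalIntegrable_const)
            (hVddc.intervalIntegrable _ _)
          exact fun u hu => hlb u ⟨hu.1, hu.2.trans hs.2⟩
      _ = deriv V s := (hftc1 s).symm
  calc c * t ^ 2 / 2 = ∫ s in (0:ℝ)..t, c * s := by
        rw [intervalIntegral.integral_const_mul, integral_id]; ring
    _ ≤ ∫ s in (0:ℝ)..t, deriv V s := by
        apply intervalIntegral.integral_mono_on ht
          ((continuous_const.mul continuous_id).intervalIntegrable _ _)
          (hic.intervalIntegrable _ _)
        exact fun s hs => hbd1 s hs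
    _ = V t := (hftc0 t).symm

lemma aux_quad_ub (V : ℝ → ℝ) (hV : ContDiff ℝ ((⊤:ℕ∞) : WithTop ℕ∞) V) (hV0 : V 0 = 0)
    (hV1 : deriv V 0 = 0) (C t : ℝ) (ht : 0 ≤ t)
    (hub : ∀ u ∈ Icc 0 t, deriv (deriv V) u ≤ C) :
    V t ≤ C * t ^ 2 / 2 := by
  have hVd : ContDiff ℝ ((⊤:ℕ∞) : WithTop ℕ∞) (deriv V) := (contDiff_infty_iff_deriv.mp hV).2
  have hVddc : Continuous (deriv (deriv V)) := (contDiff_infty_iff_deriv.mp hVd).2.continuous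
  have hic : Continuous (deriv V) := hVd.continuous
  obtain ⟨hftc1, hftc0⟩ := aux_ftc V hV hV0 hV1
  have hbd1 : ∀ s ∈ Icc (0:ℝ) t, deriv V s ≤ C * s := by
    intro s hs
    calc deriv V s = ∫ u in (0:ℝ)..s, deriv (deriv V) u := hftc1 s
      _ ≤ ∫ _ in (0:ℝ)..s, C := by
          apply intervalIntegral.integral_mono_on hs.1 (hVddc.intervalIntegrable _ _)
            intervalIntegrable_const
          exact fun u hu => hub u ⟨hu.1, hu.2.trans hs.2⟩
      _ = C * s := by simp [mul_comm]
  calc V t = ∫ s in (0:ℝ)..t, deriv V s := hftc0 t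
    _ ≤ ∫ s in (0:ℝ)..t, C * s := by
        apply intervalIntegral.integral_mono_on ht (hic.intervalIntegrable _ _)
          ((continuous_const.mul continuous_id).intervalIntegrable _ _)
        exact fun s hs => hbd1 s hs
    _ = C * t ^ 2 / 2 := by
        rw [intervalIntegral.integral_const_mul, integral_id]; ring

lemma aux_ratio (V : ℝ → ℝ) (hV : ContDiff ℝ ((⊤:ℕ∞) : WithTop ℕ∞) V) (hV0 : V 0 = 0)
    (hV1 : deriv V 0 = 0) (a : ℝ) (hV2 : deriv (deriv V) 0 = a) :
    Tendsto (fun t => V t / t ^ 2) (nhdsWithin 0 (Ioi 0)) (nhds (a / 2)) := by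
  have hVd : ContDiff ℝ ((⊤:ℕ∞) : WithTop ℕ∞) (deriv V) := (contDiff_infty_iff_deriv.mp hV).2
  have hc : Continuous (deriv (deriv V)) := (contDiff_infty_iff_deriv.mp hVd).2.continuous
  rw [Metric.tendsto_nhdsWithin_nhds]
  intro η hη
  have hev : ∀ᶠ u in nhds (0:ℝ), dist (deriv (deriv V) u) a < η / 2 := by
    have h := hc.continuousAt (x := (0:ℝ))
    rw [ContinuousAt, hV2] at h
    exact h (Metric.ball_mem_nhds a (by linarith))
  obtain ⟨r, hr, hball⟩ := Metric.eventually_nhds_iff.mp hev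
  refine ⟨r / 2, by linarith, fun t ht hdist => ?_⟩
  have ht0 : 0 < t := ht
  have htr : t < r := by
    rw [Real.dist_eq, sub_zero, abs_of_pos ht0] at hdist; linarith
  have hbd : ∀ u ∈ Icc (0:ℝ) t, a - η / 2 ≤ deriv (deriv V) u ∧ deriv (deriv V) u ≤ a + η / 2 := by
    intro u hu
    have : dist u 0 < r := by
      rw [Real.dist_eq, sub_zero, abs_of_nonneg hu.1]; linarith [hu.2]
    have := hball this
    rw [Real.dist_eq, abs_lt] at this
    constructor <;> linarith [this.1, this.2]
  have hl := aux_quad_lb V hV hV0 hV1 (a - η / 2) t ht0.le (fun u hu => (hbd u hu).1)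
  have hu := aux_quad_ub V hV hV0 hV1 (a + η / 2) t ht0.le (fun u hu => (hbd u hu).2)
  have ht2 : (0:ℝ) < t ^ 2 := by positivity
  have k1 : (a - η / 2) / 2 ≤ V t / t ^ 2 := by rw [le_div_iff₀ ht2]; nlinarith
  have k2 : V t / t ^ 2 ≤ (a + η / 2) / 2 := by rw [div_le_iff₀ ht2]; nlinarith
  rw [Real.dist_eq, abs_lt]
  constructor <;> linarith

lemma aux_exp_small (m : ℝ) (hm : 0 < m) :
    Tendsto (fun ε : ℝ => Real.exp (-m / ε) / Real.sqrt ε) (nhdsWithin 0 (Ioi 0)) (nhds 0) := by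
  apply squeeze_zero'
  · filter_upwards [self_mem_nhdsWithin] with ε hε
    positivity
  · show ∀ᶠ ε in nhdsWithin 0 (Ioi 0), Real.exp (-m / ε) / Real.sqrt ε ≤ 4 / m ^ 2 * ε
    filter_upwards [Ioo_mem_nhdsGT_of_mem ⟨le_refl (0:ℝ), zero_lt_one⟩] with ε hε
    have hε0 : 0 < ε := hε.1
    have hε1 : ε ≤ 1 := hε.2.le
    have hkey : Real.exp (-m / ε) ≤ 4 * ε ^ 2 / m ^ 2 := by
      have h1 : m / (2 * ε) + 1 ≤ Real.exp (m / (2 * ε)) := by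
        have := Real.add_one_le_exp (m / (2 * ε)); linarith
      have h2 : Real.exp (m / ε) = Real.exp (m / (2 * ε)) * Real.exp (m / (2 * ε)) := by
        rw [← Real.exp_add]; congr 1; ring
      have h3 : m ^ 2 / (4 * ε ^ 2) ≤ Real.exp (m / ε) := by
        rw [h2]
        have hp : 0 < m / (2 * ε) := by positivity
        have hids : m ^ 2 / (4 * ε ^ 2) = (m / (2 * ε)) ^ 2 := by field_simp; ring
        nlinarith [h1, hp, hids, mul_self_nonneg (Real.exp (m / (2 * ε)) - (m / (2 * ε) + 1))]
      calc Real.exp (-m / ε) = (Real.exp (m / ε))⁻¹ := by rw [neg_div, Real.exp_neg]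
        _ ≤ (m ^ 2 / (4 * ε ^ 2))⁻¹ := inv_anti₀ (by positivity) h3
        _ = 4 * ε ^ 2 / m ^ 2 := by rw [inv_div]
    have hsq : ε ≤ Real.sqrt ε := by
      calc ε = Real.sqrt (ε ^ 2) := (Real.sqrt_sq hε0.le).symm
        _ ≤ Real.sqrt ε := Real.sqrt_le_sqrt (by nlinarith)
    calc Real.exp (-m / ε) / Real.sqrt ε ≤ (4 * ε ^ 2 / m ^ 2) / ε :=
          div_le_div₀ (by positivity) hkey hε0 hsq
      _ = 4 / m ^ 2 * ε := by field_simp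
  · have : Tendsto (fun ε : ℝ => 4 / m ^ 2 * ε) (nhds 0) (nhds 0) := by
      have := Filter.Tendsto.const_mul (4 / m ^ 2) (tendsto_id : Tendsto id (nhds (0:ℝ)) (nhds 0))
      simpa using this
    exact this.mono_left nhdsWithin_le_nhds

lemma aux_main (V : ℝ → ℝ) (hV : ContDiff ℝ ((⊤:ℕ∞) : WithTop ℕ∞) V) (hV0 : V 0 = 0)
    (hV1 : deriv V 0 = 0) (a : ℝ) (ha : 0 < a) (hV2 : deriv (deriv V) 0 = a)
    (δ : ℝ) (hδ : 0 < δ) (hquad : ∀ t ∈ Icc 0 δ, a / 4 * t ^ 2 ≤ V t) :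
    Tendsto (fun ε => (∫ t in (0:ℝ)..δ, Real.exp (-(V t) / ε)) / Real.sqrt ε)
      (nhdsWithin 0 (Ioi 0)) (nhds (Real.sqrt (π / (2 * a)))) := by
  have hVc : Continuous V := hV.continuous
  set F : ℝ → ℝ → ℝ := fun ε s =>
    (Ioc (0:ℝ) (δ / Real.sqrt ε)).indicator (fun s => Real.exp (-(V (Real.sqrt ε * s)) / ε)) s
    with hF
  set flim : ℝ → ℝ := (Ioi (0:ℝ)).indicator (fun s => Real.exp (-(a / 2) * s ^ 2)) with hflim
  have hratio := aux_ratio V hV hV0 hV1 a hV2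
  have hmain : Tendsto (fun ε => ∫ s, F ε s) (nhdsWithin 0 (Ioi 0)) (nhds (∫ s, flim s)) := by
    apply tendsto_integral_filter_of_dominated_convergence
      (fun s => Real.exp (-(a / 4) * s ^ 2))
    · filter_upwards with ε
      exact (((Real.continuous_exp.comp
        ((hVc.comp (continuous_const.mul continuous_id)).neg.div_const ε))).aestronglyMeasurable).indicator
        measurableSet_Ioc
    · filter_upwards [self_mem_nhdsWithin] with ε (hε : ε ∈ Ioi (0:ℝ))
      apply ae_of_all
      intro s
      by_cases hs : s ∈ Ioc (0:ℝ) (δ / Real.sqrt ε)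
      · rw [hF]
        simp only [indicator_of_mem hs]
        rw [Real.norm_eq_abs, Real.abs_exp]
        apply Real.exp_le_exp.mpr
        have hε' : (0:ℝ) < ε := hε
        have hsq : 0 < Real.sqrt ε := Real.sqrt_pos.mpr hε'
        have ht1 : 0 < Real.sqrt ε * s := mul_pos hsq hs.1
        have ht2 : Real.sqrt ε * s ≤ δ := by
          calc Real.sqrt ε * s ≤ Real.sqrt ε * (δ / Real.sqrt ε) := by gcongr; exact hs.2
            _ = δ := by field_simp
        have hq := hquad (Real.sqrt ε * s) ⟨ht1.le, ht2⟩
        rw [mul_pow, Real.sq_sqrt hε'.le] at hq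
        rw [div_le_iff₀ hε']
        nlinarith
      · rw [hF]
        simp only [indicator_of_notMem hs]
        simp only [norm_zero]
        positivity
    · exact integrable_exp_neg_mul_sq (by positivity : (0:ℝ) < a / 4)
    · have h0 : ∀ᵐ s : ℝ, s ≠ (0:ℝ) := by
        rw [ae_iff]
        simp only [ne_eq, not_not, setOf_eq_eq_singleton]
        exact measure_singleton 0
      filter_upwards [h0] with s hs
      rcases lt_or_gt_of_ne hs with hneg | hpos
      · have hz : ∀ ε : ℝ, F ε s = 0 := fun ε =>
          indicator_of_notMem (fun h => absurd h.1 (not_lt.mpr hneg.le)) _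
        have hfz : flim s = 0 :=
          indicator_of_notMem (by simpa using not_lt.mpr hneg.le) _
        rw [hfz]
        exact tendsto_const_nhds.congr fun ε => (hz ε).symm
      · have hfz : flim s = Real.exp (-(a / 2) * s ^ 2) := indicator_of_mem hpos _
        rw [hfz]
        have hev : (fun ε : ℝ => F ε s) =ᶠ[nhdsWithin (0:ℝ) (Ioi 0)]
            fun ε => Real.exp (-(V (Real.sqrt ε * s)) / ε) := by
          filter_upwards [Ioo_mem_nhdsGT_of_mem ⟨le_refl (0:ℝ), (by positivity : (0:ℝ) < (δ / s) ^ 2)⟩]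
            with ε hε
          apply indicator_of_mem
          refine ⟨hpos, ?_⟩
          have hlt : Real.sqrt ε < δ / s := by
            have h := Real.sqrt_lt_sqrt hε.1.le hε.2
            rwa [Real.sqrt_sq (by positivity)] at h
          rw [le_div_iff₀ (Real.sqrt_pos.mpr hε.1)]
          have := (lt_div_iff₀ hpos).mp hlt
          nlinarith
        have ht : Tendsto (fun ε : ℝ => Real.sqrt ε * s) (nhdsWithin 0 (Ioi 0))
            (nhdsWithin 0 (Ioi 0)) := by
          rw [tendsto_nhdsWithin_iff]
          constructor
          · have h1 : Tendsto (fun ε : ℝ => Real.sqrt ε * s) (nhds 0) (nhds 0) := by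
              have := (Real.continuous_sqrt.tendsto (0:ℝ)).mul_const s
              simpa using this
            exact h1.mono_left nhdsWithin_le_nhds
          · filter_upwards [self_mem_nhdsWithin] with ε (hε : ε ∈ Ioi (0:ℝ))
            exact mul_pos (Real.sqrt_pos.mpr hε) hpos
        have hr : Tendsto (fun ε : ℝ => V (Real.sqrt ε * s) / (Real.sqrt ε * s) ^ 2 * s ^ 2)
            (nhdsWithin 0 (Ioi 0)) (nhds (a / 2 * s ^ 2)) := (hratio.comp ht).mul_const _
        have heq : ∀ᶠ ε in nhdsWithin (0:ℝ) (Ioi 0),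
            V (Real.sqrt ε * s) / (Real.sqrt ε * s) ^ 2 * s ^ 2 = V (Real.sqrt ε * s) / ε := by
          filter_upwards [self_mem_nhdsWithin] with ε (hε : ε ∈ Ioi (0:ℝ))
          have hε' : (0:ℝ) < ε := hε
          rw [mul_pow, Real.sq_sqrt hε'.le]
          field_simp
        have hr2 : Tendsto (fun ε : ℝ => V (Real.sqrt ε * s) / ε)
            (nhdsWithin 0 (Ioi 0)) (nhds (a / 2 * s ^ 2)) := hr.congr' heq
        have hr3 : Tendsto (fun ε : ℝ => Real.exp (-(V (Real.sqrt ε * s) / ε)))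
            (nhdsWithin 0 (Ioi 0)) (nhds (Real.exp (-(a / 2 * s ^ 2)))) :=
          (Real.continuous_exp.tendsto _).comp hr2.neg
        have hr4 : Tendsto (fun ε : ℝ => Real.exp (-(V (Real.sqrt ε * s)) / ε))
            (nhdsWithin 0 (Ioi 0)) (nhds (Real.exp (-(a / 2) * s ^ 2))) := by
          simpa only [neg_div, neg_mul] using hr3
        exact hr4.congr' hev.symm
  have hrel : (fun ε : ℝ => (∫ t in (0:ℝ)..δ, Real.exp (-(V t) / ε)) / Real.sqrt ε)
      =ᶠ[nhdsWithin (0:ℝ) (Ioi 0)] fun ε => ∫ s, F ε s := by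
    filter_upwards [self_mem_nhdsWithin] with ε (hε : ε ∈ Ioi (0:ℝ))
    have hε' : (0:ℝ) < ε := hε
    have hsq : 0 < Real.sqrt ε := Real.sqrt_pos.mpr hε'
    simp only [hF]
    rw [integral_indicator measurableSet_Ioc]
    rw [← intervalIntegral.integral_of_le (by positivity : (0:ℝ) ≤ δ / Real.sqrt ε)]
    rw [intervalIntegral.integral_comp_mul_left (fun t => Real.exp (-(V t) / ε)) hsq.ne']
    rw [mul_zero, show Real.sqrt ε * (δ / Real.sqrt ε) = δ by field_simp]
    rw [smul_eq_mul, div_eq_mul_inv, mul_comm]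
  have hlimval : ∫ s, flim s = Real.sqrt (π / (2 * a)) := by
    rw [hflim, integral_indicator measurableSet_Ioi]
    rw [integral_gaussian_Ioi (a / 2)]
    rw [show π / (a / 2) = 2 ^ 2 * (π / (2 * a)) by field_simp]
    rw [Real.sqrt_mul (by positivity), Real.sqrt_sq (by norm_num)]
    ring
  rw [← hlimval]
  exact hmain.congr' hrel.symm

/-- Laplace-type asymptotics (Lemma 2.1): for a smooth potential `U` with a nondegenerate
local minimum at `x₀`, for all sufficiently small `δ > 0`,
`∫₀^δ (t/ε)(-U'(x₀-t)) e^{-(U(x₀-t)-U(x₀))/ε} dt = √(πε/(2U''(x₀))) (1+o(1))` as `ε → 0⁺`. -/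
theorem stmt0 (U : ℝ → ℝ) (x₀ : ℝ) (hU : ContDiff ℝ (⊤ : ℕ∞) U)
    (h1 : deriv U x₀ = 0) (h2 : 0 < deriv (deriv U) x₀) :
    ∃ δ₀ > (0:ℝ), ∀ δ : ℝ, 0 < δ → δ ≤ δ₀ →
      Tendsto (fun ε : ℝ =>
          (∫ t in (0:ℝ)..δ, t / ε * (-(deriv U (x₀ - t))) *
              Real.exp (-(U (x₀ - t) - U x₀) / ε)) /
            Real.sqrt (Real.pi * ε / (2 * deriv (deriv U) x₀)))
        (nhdsWithin 0 (Ioi 0)) (nhds 1) := by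
  set a := deriv (deriv U) x₀ with ha_def
  set V : ℝ → ℝ := fun t => U (x₀ - t) - U x₀ with hVdef
  have hUs : ContDiff ℝ ((⊤:ℕ∞) : WithTop ℕ∞) U := hU.of_le (by simp)
  have hU' : ContDiff ℝ ((⊤:ℕ∞) : WithTop ℕ∞) (deriv U) := (contDiff_infty_iff_deriv.mp hUs).2
  have hU'' : Continuous (deriv (deriv U)) := (contDiff_infty_iff_deriv.mp hU').2.continuous
  have hVsm : ContDiff ℝ ((⊤:ℕ∞) : WithTop ℕ∞) V :=
    (hUs.comp (contDiff_const.sub contDiff_id)).sub contDiff_const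
  have hV0 : V 0 = 0 := by simp [hVdef]
  have hinner : ∀ t : ℝ, HasDerivAt (fun t : ℝ => x₀ - t) (-1) t := fun t =>
    (hasDerivAt_id t).const_sub x₀
  have hderiv : ∀ t : ℝ, HasDerivAt V (-(deriv U (x₀ - t))) t := by
    intro t
    have h := ((hUs.differentiable (by simp)).differentiableAt
      (x := x₀ - t)).hasDerivAt
    have := (h.comp t (hinner t)).sub_const (U x₀)
    simpa [mul_comm, hVdef] using this
  have hVd_eq : deriv V = fun t => -(deriv U (x₀ - t)) := funext fun t => (hderiv t).deriv
  have hV1 : deriv V 0 = 0 := by rw [hVd_eq]; simp [h1]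
  have hdd : ∀ t : ℝ, HasDerivAt (deriv V) (deriv (deriv U) (x₀ - t)) t := by
    intro t
    rw [hVd_eq]
    have h := ((hU'.differentiable (by simp)).differentiableAt
      (x := x₀ - t)).hasDerivAt
    have := (h.comp t (hinner t)).neg
    simpa [mul_comm, Function.comp_def, Pi.neg_def] using this
  have hVdd_eq : deriv (deriv V) = fun t => deriv (deriv U) (x₀ - t) :=
    funext fun t => (hdd t).deriv
  have hV2 : deriv (deriv V) 0 = a := by rw [hVdd_eq]; simp [ha_def]
  have hVddc : Continuous (deriv (deriv V)) := by
    rw [hVdd_eq]; exact hU''.comp (continuous_const.sub continuous_id)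
  -- choose δ₀
  have hev : ∀ᶠ t in nhds (0:ℝ), a / 2 < deriv (deriv V) t := by
    have h := hVddc.continuousAt (x := (0:ℝ))
    rw [ContinuousAt, hV2] at h
    exact h (eventually_gt_nhds (by linarith))
  obtain ⟨r, hr, hball⟩ := Metric.eventually_nhds_iff.mp hev
  refine ⟨r / 2, by linarith, fun δ hδ hδr => ?_⟩
  have hlow : ∀ u ∈ Icc (0:ℝ) δ, a / 2 ≤ deriv (deriv V) u := by
    intro u hu
    refine (hball ?_).le
    rw [Real.dist_eq, sub_zero, abs_of_nonneg hu.1]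
    linarith [hu.2]
  have hquad : ∀ t ∈ Icc (0:ℝ) δ, a / 4 * t ^ 2 ≤ V t := by
    intro t ht
    have h := aux_quad_lb V hVsm hV0 hV1 (a / 2) t ht.1
      (fun u hu => hlow u ⟨hu.1, hu.2.trans ht.2⟩)
    linarith
  have hVδpos : 0 < V δ :=
    lt_of_lt_of_le (by positivity : (0:ℝ) < a / 4 * δ ^ 2) (hquad δ ⟨hδ.le, le_refl δ⟩)
  -- integration by parts
  have hibp : ∀ ε : ℝ, 0 < ε →
      (∫ t in (0:ℝ)..δ, t / ε * (-(deriv U (x₀ - t))) * Real.exp (-(U (x₀ - t) - U x₀) / ε))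
      = (∫ t in (0:ℝ)..δ, Real.exp (-(V t) / ε)) - δ * Real.exp (-(V δ) / ε) := by
    intro ε hε
    have hg : ∀ t : ℝ, HasDerivAt (fun t => Real.exp (-(V t) / ε))
        (Real.exp (-(V t) / ε) * (-(-(deriv U (x₀ - t))) / ε)) t := fun t =>
      ((hderiv t).neg.div_const ε).exp
    have hh : ∀ t : ℝ, HasDerivAt (fun t => t * Real.exp (-(V t) / ε))
        (1 * Real.exp (-(V t) / ε)
          + t * (Real.exp (-(V t) / ε) * (-(-(deriv U (x₀ - t))) / ε))) t :=
      fun t => (hasDerivAt_id t).mul (hg t)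
    have hgc : Continuous fun t => Real.exp (-(V t) / ε) :=
      Real.continuous_exp.comp ((hVsm.continuous.neg).div_const ε)
    have hduc : Continuous fun t : ℝ => deriv U (x₀ - t) :=
      (hU'.continuous).comp (continuous_const.sub continuous_id)
    have hDc : Continuous fun t : ℝ => 1 * Real.exp (-(V t) / ε)
        + t * (Real.exp (-(V t) / ε) * (-(-(deriv U (x₀ - t))) / ε)) :=
      (continuous_const.mul hgc).add
        (continuous_id.mul (hgc.mul ((hduc.neg.neg).div_const ε)))
    have hint : (∫ t in (0:ℝ)..δ, (1 * Real.exp (-(V t) / ε)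
          + t * (Real.exp (-(V t) / ε) * (-(-(deriv U (x₀ - t))) / ε))))
        = δ * Real.exp (-(V δ) / ε) - 0 * Real.exp (-(V 0) / ε) :=
      intervalIntegral.integral_eq_sub_of_hasDerivAt (fun t _ => hh t)
        (hDc.intervalIntegrable _ _)
    have hcong : ∀ t : ℝ, t / ε * (-(deriv U (x₀ - t))) * Real.exp (-(U (x₀ - t) - U x₀) / ε)
        = Real.exp (-(V t) / ε) - (1 * Real.exp (-(V t) / ε)
          + t * (Real.exp (-(V t) / ε) * (-(-(deriv U (x₀ - t))) / ε))) := by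
      intro t
      have hVt : -(U (x₀ - t) - U x₀) / ε = -(V t) / ε := by simp only [hVdef]
      rw [hVt]; ring
    calc (∫ t in (0:ℝ)..δ, t / ε * (-(deriv U (x₀ - t))) * Real.exp (-(U (x₀ - t) - U x₀) / ε))
        = ∫ t in (0:ℝ)..δ, (Real.exp (-(V t) / ε) - (1 * Real.exp (-(V t) / ε)
          + t * (Real.exp (-(V t) / ε) * (-(-(deriv U (x₀ - t))) / ε)))) := by
          exact intervalIntegral.integral_congr (fun t _ => hcong t)
      _ = (∫ t in (0:ℝ)..δ, Real.exp (-(V t) / ε))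
          - ∫ t in (0:ℝ)..δ, (1 * Real.exp (-(V t) / ε)
          + t * (Real.exp (-(V t) / ε) * (-(-(deriv U (x₀ - t))) / ε))) :=
          intervalIntegral.integral_sub (hgc.intervalIntegrable _ _)
            (hDc.intervalIntegrable _ _)
      _ = (∫ t in (0:ℝ)..δ, Real.exp (-(V t) / ε)) - δ * Real.exp (-(V δ) / ε) := by
          rw [hint]; ring
  -- assembly
  have hL : 0 < Real.sqrt (π / (2 * a)) := Real.sqrt_pos.mpr (by positivity)
  have T1 : Tendsto (fun ε : ℝ => ((∫ t in (0:ℝ)..δ, Real.exp (-(V t) / ε)) / Real.sqrt ε)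
      / Real.sqrt (π / (2 * a))) (nhdsWithin 0 (Ioi 0)) (nhds 1) := by
    have h := (aux_main V hVsm hV0 hV1 a h2 hV2 δ hδ hquad).div_const (Real.sqrt (π / (2 * a)))
    rwa [div_self hL.ne'] at h
  have T2 : Tendsto (fun ε : ℝ => δ * (Real.exp (-(V δ) / ε) / Real.sqrt ε)
      / Real.sqrt (π / (2 * a))) (nhdsWithin 0 (Ioi 0)) (nhds 0) := by
    have h := ((aux_exp_small (V δ) hVδpos).const_mul δ).div_const (Real.sqrt (π / (2 * a)))
    simpa using h
  have hfin : Tendsto (fun ε : ℝ =>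
      ((∫ t in (0:ℝ)..δ, Real.exp (-(V t) / ε)) / Real.sqrt ε) / Real.sqrt (π / (2 * a))
      - δ * (Real.exp (-(V δ) / ε) / Real.sqrt ε) / Real.sqrt (π / (2 * a)))
      (nhdsWithin 0 (Ioi 0)) (nhds 1) := by
    have h := T1.sub T2
    simpa using h
  apply hfin.congr'
  filter_upwards [self_mem_nhdsWithin] with ε (hε : ε ∈ Ioi (0:ℝ))
  have hε' : (0:ℝ) < ε := hε
  have hsq : 0 < Real.sqrt ε := Real.sqrt_pos.mpr hε'
  rw [hibp ε hε', show π * ε / (2 * a) = ε * (π / (2 * a)) by ring,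
    Real.sqrt_mul hε'.le]
  field_simp
end

section
/- Let $S$ be uniform on $[0,1]$ and $Y$ uniform on the sphere $\mathbb{S}^{d-1}$, independent. Let $t>\frac12\sqrt d$, $x_0'\in\mathbb{T}^d$, $y_0\in\mathbb{S}^{d-1}$. Then there exists $c_2>0$ depending only on $d$ such that for every $u\in\mathbb{T}^d$ and $\delta\in(0,1)$: $\mathbb{P}\big(|x_0'+tSy_0+t(1-S)Y-u|\le\delta\big)\ge c_2\delta^d$, where $|\cdot|$ is the distance on the torus $\mathbb{T}^d=(\mathbb{R}/\mathbb{Z})^d$. -/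
/-!
Write `D = √d`. The point `x₀' + tSy₀ + t(1-S)Y` ranges over the ball of radius `t` around `x₀'`,
and since `t > D/2` this ball contains at least `(t/D)^d` integer translates `u + k`. Each of them
is hit exactly by some `(s_k, y_k)` (intermediate value theorem), and with `η = δ/(8t)` every
`(s, y)` with `|s - s_k| ≤ η`, `‖y - y_k‖ ≤ 2η` lands within `δ/2` of `u + k`. These rectangles are
disjoint for different `k`, and by independence each has probability at least
`η · η^(d-1) |B^(d-1)| / |S^(d-1)|`: a spherical cap of radius `2η` projects onto a ball of radius
`η` in the tangent hyperplane. The powers of `t` cancel, so `c₂ = (8D)^(-d) |B^(d-1)| / |S^(d-1)|`.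
That `|S^(d-1)| < ∞` follows by covering the sphere with finitely many caps, each a Lipschitz graph
over a ball.
-/

open MeasureTheory ProbabilityTheory Real Set Metric

theorem abs_sqrt_one_sub_sq_sub_sqrt_one_sub_sq_le {a b : ℝ} (ha : 0 ≤ a) (hb : 0 ≤ b)
    (ha' : a ≤ 1 / 2) (hb' : b ≤ 1 / 2) :
    |√(1 - a ^ 2) - √(1 - b ^ 2)| ≤ |a - b| := by
  have hp := Real.sq_sqrt (show 0 ≤ 1 - a ^ 2 by nlinarith)
  have hq := Real.sq_sqrt (show 0 ≤ 1 - b ^ 2 by nlinarith)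
  have hp2 : 1 / 2 ≤ √(1 - a ^ 2) := Real.le_sqrt_of_sq_le (by nlinarith)
  have hq2 : 1 / 2 ≤ √(1 - b ^ 2) := Real.le_sqrt_of_sq_le (by nlinarith)
  rw [abs_le]
  constructor <;> cases abs_cases (a - b) <;> nlinarith

section SphereGraph

variable {E : Type*} [NormedAddCommGroup E] [InnerProductSpace ℝ E] {y₁ : E}

noncomputable def sphereGraph (y₁ : E) (w : (ℝ ∙ y₁)ᗮ) : E := (w : E) + √(1 - ‖w‖ ^ 2) • y₁

theorem norm_orthogonal_add_smul_sq (hy₁ : ‖y₁‖ = 1) (w : (ℝ ∙ y₁)ᗮ) (c : ℝ) :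
    ‖(w : E) + c • y₁‖ ^ 2 = ‖w‖ ^ 2 + c ^ 2 := by
  have : inner ℝ (w : E) (c • y₁) = 0 := by
    rw [real_inner_smul_right, Submodule.mem_orthogonal_singleton_iff_inner_left.mp w.2, mul_zero]
  rw [norm_add_sq_real, this, norm_smul, hy₁, Real.norm_eq_abs, mul_one, sq_abs,
    Submodule.coe_norm]
  ring

theorem norm_sphereGraph (hy₁ : ‖y₁‖ = 1) {w : (ℝ ∙ y₁)ᗮ} (hw : ‖w‖ ≤ 1) :
    ‖sphereGraph y₁ w‖ = 1 := by
  have h := norm_orthogonal_add_smul_sq hy₁ w (√(1 - ‖w‖ ^ 2))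
  rw [Real.sq_sqrt (by nlinarith [norm_nonneg w]), add_sub_cancel] at h
  exact (pow_left_inj₀ (norm_nonneg _) zero_le_one two_ne_zero).mp (by rw [sphereGraph, h, one_pow])

theorem norm_sphereGraph_sub_le (hy₁ : ‖y₁‖ = 1) {w : (ℝ ∙ y₁)ᗮ} (hw : ‖w‖ ≤ 1) :
    ‖sphereGraph y₁ w - y₁‖ ≤ 2 * ‖w‖ := by
  set c := √(1 - ‖w‖ ^ 2)
  have hc : c ^ 2 = 1 - ‖w‖ ^ 2 := Real.sq_sqrt (by nlinarith [norm_nonneg w])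
  have hc0 : 0 ≤ c := Real.sqrt_nonneg _
  have hc1 : c ≤ 1 := Real.sqrt_le_one.mpr (by nlinarith [norm_nonneg w])
  have h := norm_orthogonal_add_smul_sq hy₁ w (c - 1)
  have hsub : sphereGraph y₁ w - y₁ = (w : E) + (c - 1) • y₁ := by
    rw [sphereGraph, sub_smul, one_smul, add_sub_assoc]
  rw [← hsub] at h
  apply le_of_sq_le_sq _ (by positivity)
  nlinarith [norm_nonneg w]

theorem orthogonalProjectionOnto_sphereGraph (w : (ℝ ∙ y₁)ᗮ) :
    (ℝ ∙ y₁)ᗮ.orthogonalProjectionOnto (sphereGraph y₁ w) = w := by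
  rw [sphereGraph, map_add, Submodule.orthogonalProjectionOnto_mem_subspace_eq_self, map_smul,
    Submodule.orthogonalProjectionOnto_orthogonalComplement_singleton_eq_zero, smul_zero, add_zero]

theorem sphereGraph_orthogonalProjectionOnto (hy₁ : ‖y₁‖ = 1) {x : E} (hx : ‖x‖ = 1)
    (hxy : 0 ≤ inner ℝ y₁ x) :
    sphereGraph y₁ ((ℝ ∙ y₁)ᗮ.orthogonalProjectionOnto x) = x := by
  set w := (ℝ ∙ y₁)ᗮ.orthogonalProjectionOnto x
  have hw : (w : E) = x - inner ℝ y₁ x • y₁ := by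
    simp [w, Submodule.orthogonalProjectionOnto_orthogonal,
      Submodule.starProjection_unit_singleton ℝ hy₁]
  have h := norm_orthogonal_add_smul_sq hy₁ w (inner ℝ y₁ x)
  rw [hw, sub_add_cancel, hx] at h
  have : √(1 - ‖w‖ ^ 2) = inner ℝ y₁ x := by
    rw [show 1 - ‖w‖ ^ 2 = (inner ℝ y₁ x) ^ 2 by linarith, Real.sqrt_sq hxy]
  rw [sphereGraph, this, hw, sub_add_cancel]

theorem lipschitzOnWith_sphereGraph (hy₁ : ‖y₁‖ = 1) :
    LipschitzOnWith 2 (sphereGraph y₁) (closedBall 0 (1 / 2)) := by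
  refine LipschitzOnWith.of_dist_le_mul fun w hw v hv => ?_
  rw [mem_closedBall_zero_iff] at hw hv
  have hsqrt := abs_sqrt_one_sub_sq_sub_sqrt_one_sub_sq_le (norm_nonneg w) (norm_nonneg v) hw hv
  calc dist (sphereGraph y₁ w) (sphereGraph y₁ v)
      = ‖((w : E) - v) + (√(1 - ‖w‖ ^ 2) - √(1 - ‖v‖ ^ 2)) • y₁‖ := by
        rw [dist_eq_norm, sphereGraph, sphereGraph, sub_smul]; abel_nf
    _ ≤ dist w v + |‖w‖ - ‖v‖| := by
        refine (norm_add_le _ _).trans (add_le_add ?_ ?_)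
        · rw [dist_eq_norm, Submodule.coe_norm, Submodule.coe_sub]
        · rwa [norm_smul, hy₁, mul_one, Real.norm_eq_abs]
    _ ≤ 2 * dist w v := by
        linarith [abs_norm_sub_norm_le w v, dist_eq_norm w v]

end SphereGraph

section SphereCaps

variable {E : Type*} [NormedAddCommGroup E] [InnerProductSpace ℝ E] [MeasurableSpace E]
  [BorelSpace E] {m : ℕ} [Fact (Module.finrank ℝ E = m + 1)] {y₁ : E}

theorem hausdorffMeasure_ball_orthogonal_span_singleton (hy₁ : y₁ ≠ 0) (r : ℝ) :
    μH[m] (ball (0 : (ℝ ∙ y₁)ᗮ) r) = μH[m] (ball (0 : EuclideanSpace ℝ (Fin m)) r) := by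
  set e := (OrthonormalBasis.fromOrthogonalSpanSingleton (𝕜 := ℝ) m hy₁).repr
  rw [← e.toIsometryEquiv.hausdorffMeasure_preimage, e.toIsometryEquiv.preimage_ball]
  simp

theorem ofReal_pow_mul_le_hausdorffMeasure_cap (hy₁ : ‖y₁‖ = 1) {ρ : ℝ} (hρ0 : 0 < ρ)
    (hρ : ρ ≤ 2) :
    ENNReal.ofReal ((ρ / 2) ^ m) * μH[m] (ball (0 : EuclideanSpace ℝ (Fin m)) 1) ≤
      μH[m] (sphere (0 : E) 1 ∩ closedBall y₁ ρ) := by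
  have hsub : ball (0 : (ℝ ∙ y₁)ᗮ) (ρ / 2) ⊆
      (ℝ ∙ y₁)ᗮ.orthogonalProjectionOnto '' (sphere (0 : E) 1 ∩ closedBall y₁ ρ) := by
    intro w hw
    rw [mem_ball_zero_iff] at hw
    refine ⟨sphereGraph y₁ w, ⟨?_, ?_⟩, orthogonalProjectionOnto_sphereGraph w⟩
    · rw [mem_sphere_zero_iff_norm]
      exact norm_sphereGraph hy₁ (by linarith)
    · rw [mem_closedBall, dist_eq_norm]
      linarith [norm_sphereGraph_sub_le hy₁ (w := w) (by linarith)]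
  calc ENNReal.ofReal ((ρ / 2) ^ m) * μH[m] (ball (0 : EuclideanSpace ℝ (Fin m)) 1)
      = μH[m] (ball (0 : (ℝ ∙ y₁)ᗮ) (ρ / 2)) := by
        rw [hausdorffMeasure_ball_orthogonal_span_singleton (norm_ne_zero_iff.mp (by simp [hy₁])),
          Measure.addHaar_ball_of_pos _ _ (r := ρ / 2) (by positivity), finrank_euclideanSpace_fin]
    _ ≤ μH[m] ((ℝ ∙ y₁)ᗮ.orthogonalProjectionOnto '' (sphere (0 : E) 1 ∩ closedBall y₁ ρ)) :=
        measure_mono hsub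
    _ ≤ μH[m] (sphere (0 : E) 1 ∩ closedBall y₁ ρ) :=
        hausdorffMeasure_orthogonalProjectionOnto_le _ _ _ (Nat.cast_nonneg m)

theorem hausdorffMeasure_cap_lt_top (hy₁ : ‖y₁‖ = 1) :
    μH[m] (sphere (0 : E) 1 ∩ closedBall y₁ (1 / 2)) < ⊤ := by
  have hsub : sphere (0 : E) 1 ∩ closedBall y₁ (1 / 2) ⊆
      sphereGraph y₁ '' closedBall 0 (1 / 2) := by
    rintro x ⟨hx, hxy⟩
    rw [mem_sphere_zero_iff_norm] at hx
    rw [mem_closedBall, dist_eq_norm] at hxy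
    have hinner : 0 ≤ inner ℝ y₁ x := by
      have := norm_sub_sq_real x y₁
      rw [hx, hy₁, real_inner_comm] at this
      nlinarith [norm_nonneg (x - y₁)]
    refine ⟨(ℝ ∙ y₁)ᗮ.orthogonalProjectionOnto x, ?_,
      sphereGraph_orthogonalProjectionOnto hy₁ hx hinner⟩
    have hproj : (ℝ ∙ y₁)ᗮ.orthogonalProjectionOnto x =
        (ℝ ∙ y₁)ᗮ.orthogonalProjectionOnto (x - y₁) := by
      rw [map_sub, Submodule.orthogonalProjectionOnto_orthogonalComplement_singleton_eq_zero,
        sub_zero]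
    rw [mem_closedBall_zero_iff, hproj]
    exact (Submodule.norm_orthogonalProjectionOnto_apply_le _ _).trans hxy
  calc μH[m] (sphere (0 : E) 1 ∩ closedBall y₁ (1 / 2))
      ≤ μH[m] (sphereGraph y₁ '' closedBall 0 (1 / 2)) := measure_mono hsub
    _ ≤ (2 : NNReal) ^ (m : ℝ) * μH[m] (ball (0 : (ℝ ∙ y₁)ᗮ) 1) :=
        ((lipschitzOnWith_sphereGraph hy₁).hausdorffMeasure_image_le (Nat.cast_nonneg m)).trans
          (mul_le_mul_right (measure_mono (closedBall_subset_ball (by norm_num))) _)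
    _ < ⊤ := by
        rw [hausdorffMeasure_ball_orthogonal_span_singleton (norm_ne_zero_iff.mp (by simp [hy₁]))]
        exact ENNReal.mul_lt_top (by simp) measure_ball_lt_top

theorem hausdorffMeasure_sphere_lt_top : μH[m] (sphere (0 : E) 1) < ⊤ := by
  have : FiniteDimensional ℝ E := .of_fact_finrank_eq_succ m
  obtain ⟨C, hC, hCfin, hcover⟩ :=
    (isCompact_sphere (0 : E) 1).finite_cover_balls (e := 1 / 2) (by norm_num)
  calc μH[m] (sphere (0 : E) 1)
      ≤ μH[m] (⋃ y ∈ C, sphere (0 : E) 1 ∩ closedBall y (1 / 2)) := by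
        refine measure_mono fun x hx => ?_
        obtain ⟨y, hyC, hxy⟩ := mem_iUnion₂.mp (hcover hx)
        exact mem_iUnion₂.mpr ⟨y, hyC, hx, ball_subset_closedBall hxy⟩
    _ ≤ ∑' y : C, μH[m] (sphere (0 : E) 1 ∩ closedBall y (1 / 2)) :=
        measure_biUnion_le _ hCfin.countable _
    _ < ⊤ := by
        have := hCfin.fintype
        rw [tsum_fintype]
        exact ENNReal.sum_lt_top.mpr fun y _ =>
          hausdorffMeasure_cap_lt_top (by simpa using hC y.2)

theorem hausdorffMeasure_sphere_pos : 0 < μH[m] (sphere (0 : E) 1) := by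
  have : Nontrivial E := Module.nontrivial_of_finrank_pos (R := ℝ)
    (by rw [(Fact.out : Module.finrank ℝ E = m + 1)]; exact m.succ_pos)
  obtain ⟨y, hy⟩ := exists_norm_eq E zero_le_one
  calc (0 : ENNReal)
      < ENNReal.ofReal ((1 / 2) ^ m) * μH[m] (ball (0 : EuclideanSpace ℝ (Fin m)) 1) :=
        ENNReal.mul_pos (by simp) (measure_ball_pos _ _ one_pos).ne'
    _ ≤ μH[m] (sphere (0 : E) 1 ∩ closedBall y 1) :=
        ofReal_pow_mul_le_hausdorffMeasure_cap hy one_pos one_le_two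
    _ ≤ μH[m] (sphere (0 : E) 1) := measure_mono inter_subset_left

theorem ofReal_le_cond_sphere_closedBall (hy₁ : ‖y₁‖ = 1) {r : ℝ} (hr0 : 0 < r) (hr : r ≤ 1) :
    ENNReal.ofReal (r ^ m * (μH[m] (ball (0 : EuclideanSpace ℝ (Fin m)) 1)).toReal /
        (μH[m] (sphere (0 : E) 1)).toReal) ≤ μH[m][closedBall y₁ (2 * r) | sphere (0 : E) 1] := by
  have hMS := (hausdorffMeasure_sphere_lt_top (E := E) (m := m)).ne
  have hcap := ofReal_pow_mul_le_hausdorffMeasure_cap (E := E) (m := m) hy₁ (ρ := 2 * r)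
    (by positivity) (by linarith)
  rw [mul_div_cancel_left₀ r two_ne_zero] at hcap
  have hMS0 := (hausdorffMeasure_sphere_pos (E := E) (m := m)).ne'
  rw [ENNReal.ofReal_div_of_pos (ENNReal.toReal_pos hMS0 hMS),
    ENNReal.ofReal_mul (by positivity), ENNReal.ofReal_toReal measure_ball_lt_top.ne,
    ENNReal.ofReal_toReal hMS, cond_apply isClosed_sphere.measurableSet, ENNReal.div_eq_inv_mul]
  exact mul_le_mul_right hcap _

instance isProbabilityMeasure_cond_sphere : IsProbabilityMeasure μH[m][|sphere (0 : E) 1] :=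
  cond_isProbabilityMeasure_of_finite hausdorffMeasure_sphere_pos.ne'
    hausdorffMeasure_sphere_lt_top.ne

end SphereCaps

instance fact_finrank_euclideanSpace_fin_succ (m : ℕ) :
    Fact (Module.finrank ℝ (EuclideanSpace ℝ (Fin (m + 1))) = m + 1) :=
  ⟨finrank_euclideanSpace_fin⟩

section Displacement

variable {E : Type*} [NormedAddCommGroup E] [NormedSpace ℝ E]

-- Displacement over time `t` when the velocity jumps from `y₀` to `p.2` at time `t * p.1`.
def jumpDisplacement (t : ℝ) (y₀ : E) (p : ℝ × E) : E := (t * p.1) • y₀ + (t * (1 - p.1)) • p.2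

theorem exists_jumpDisplacement_eq {t : ℝ} (ht : 0 < t) {y₀ v : E} (hy₀ : ‖y₀‖ = 1)
    (hv : ‖v‖ ≤ t) : ∃ s ∈ Icc (0 : ℝ) 1, ∃ y : E, ‖y‖ = 1 ∧ jumpDisplacement t y₀ (s, y) = v := by
  by_cases hv₀ : v = t • y₀
  · exact ⟨1, right_mem_Icc.mpr zero_le_one, y₀, hy₀, by simp [jumpDisplacement, hv₀]⟩
  let f : ℝ → ℝ := fun s => ‖v - (t * s) • y₀‖ - t * (1 - s)
  have hf : Continuous f := by fun_prop
  obtain ⟨s, hs, hfs⟩ : (0 : ℝ) ∈ f '' Icc 0 1 :=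
    intermediate_value_Icc zero_le_one hf.continuousOn
      ⟨by simp [f, hv], by simp [f]⟩
  have hs1 : s ≠ 1 := by
    rintro rfl
    simp [f, sub_eq_zero, hv₀] at hfs
  have hr : 0 < t * (1 - s) := mul_pos ht (sub_pos.mpr (lt_of_le_of_ne hs.2 hs1))
  have hnorm : ‖v - (t * s) • y₀‖ = t * (1 - s) := by linarith [show f s = 0 from hfs]
  refine ⟨s, hs, (t * (1 - s))⁻¹ • (v - (t * s) • y₀), ?_, ?_⟩
  · rw [norm_smul, norm_inv, Real.norm_of_nonneg hr.le, hnorm, inv_mul_cancel₀ hr.ne']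
  · rw [jumpDisplacement, smul_inv_smul₀ hr.ne', add_sub_cancel]

theorem norm_jumpDisplacement_sub_le {t : ℝ} (ht : 0 ≤ t) {y₀ : E} (hy₀ : ‖y₀‖ = 1)
    {p q : ℝ × E} (hp : p.1 ∈ Icc (0 : ℝ) 1) (hq : ‖q.2‖ = 1) :
    ‖jumpDisplacement t y₀ p - jumpDisplacement t y₀ q‖ ≤ t * (2 * |p.1 - q.1| + ‖p.2 - q.2‖) := by
  have hsplit : jumpDisplacement t y₀ p - jumpDisplacement t y₀ q =
      (t * (p.1 - q.1)) • y₀ + (t * (1 - p.1)) • (p.2 - q.2) + (t * (q.1 - p.1)) • q.2 := by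
    simp only [jumpDisplacement]; module
  have h1p : |1 - p.1| ≤ 1 := abs_le.mpr ⟨by linarith [hp.2], by linarith [hp.1]⟩
  rw [hsplit]
  refine (norm_add₃_le).trans ?_
  simp only [norm_smul, Real.norm_eq_abs, abs_mul, abs_of_nonneg ht, hy₀, hq, abs_sub_comm q.1]
  have := mul_le_mul_of_nonneg_right h1p (norm_nonneg (p.2 - q.2))
  nlinarith [mul_le_mul_of_nonneg_left this ht]

end Displacement

theorem exists_Icc_subset_Icc_zero_one {s₀ η : ℝ} (hs₀ : s₀ ∈ Icc (0 : ℝ) 1) (hη0 : 0 ≤ η)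
    (hη : η ≤ 1) : ∃ a, s₀ ∈ Icc a (a + η) ∧ Icc a (a + η) ⊆ Icc 0 1 := by
  refine ⟨min s₀ (1 - η), ⟨min_le_left _ _, ?_⟩, Icc_subset_Icc ?_ ?_⟩
  · rcases min_cases s₀ (1 - η) with h | h <;> linarith [hs₀.2]
  · exact le_min hs₀.1 (by linarith)
  · linarith [min_le_right s₀ (1 - η)]

def latticePoint {d : ℕ} (k : Fin d → ℤ) : EuclideanSpace ℝ (Fin d) :=
  WithLp.toLp 2 fun i => (k i : ℝ)

theorem one_le_norm_latticePoint_sub {d : ℕ} {k k' : Fin d → ℤ} (h : k ≠ k') :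
    1 ≤ ‖latticePoint k - latticePoint k'‖ := by
  obtain ⟨i, hi⟩ := Function.ne_iff.mp h
  calc (1 : ℝ) ≤ |((k i - k' i : ℤ) : ℝ)| := by exact_mod_cast Int.one_le_abs (sub_ne_zero.2 hi)
    _ = ‖(latticePoint k - latticePoint k') i‖ := by simp [latticePoint]
    _ ≤ ‖latticePoint k - latticePoint k'‖ := PiLp.norm_apply_le _ _

theorem le_card_Icc_ceil_floor {c a : ℝ} (ha : 1 / 2 < a) :
    a ≤ (Finset.Icc ⌈c - a⌉ ⌊c + a⌋).card := by
  have hceil := Int.ceil_lt_add_one (c - a)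
  have hfloor := Int.sub_one_lt_floor (c + a)
  have hlt : ((⌈c - a⌉ : ℤ) : ℝ) < ⌊c + a⌋ + 1 := by linarith
  have hle : ⌈c - a⌉ ≤ ⌊c + a⌋ + 1 := by exact_mod_cast hlt.le
  have hcard : ((Finset.Icc ⌈c - a⌉ ⌊c + a⌋).card : ℝ) = ⌊c + a⌋ + 1 - ⌈c - a⌉ := by
    exact_mod_cast Int.card_Icc_of_le _ _ hle
  have hone : (1 : ℝ) ≤ ⌊c + a⌋ + 1 - ⌈c - a⌉ := by
    have : ⌈c - a⌉ < ⌊c + a⌋ + 1 := by exact_mod_cast hlt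
    exact_mod_cast (show (1 : ℤ) ≤ ⌊c + a⌋ + 1 - ⌈c - a⌉ by omega)
  rw [hcard]
  rcases le_or_gt a 1 with h | h <;> linarith

theorem exists_finset_norm_latticePoint_sub_le {d : ℕ} (c : EuclideanSpace ℝ (Fin d)) {a : ℝ}
    (ha : 1 / 2 < a) :
    ∃ K : Finset (Fin d → ℤ), a ^ d ≤ K.card ∧ ∀ k ∈ K, ‖latticePoint k - c‖ ≤ √d * a := by
  refine ⟨Fintype.piFinset fun i => Finset.Icc ⌈c i - a⌉ ⌊c i + a⌋, ?_, fun k hk => ?_⟩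
  · rw [Fintype.card_piFinset, Nat.cast_prod, ← Fin.prod_const]
    exact Finset.prod_le_prod (fun _ _ => by linarith) fun i _ => le_card_Icc_ceil_floor ha
  · rw [Fintype.mem_piFinset] at hk
    have hcoord : ∀ i, ‖(latticePoint k - c) i‖ ≤ a := fun i => by
      have := Finset.mem_Icc.mp (hk i)
      have h1 := (Int.ceil_le).mp this.1
      have h2 := (Int.le_floor).mp this.2
      simp only [PiLp.sub_apply, latticePoint, Real.norm_eq_abs, abs_le]
      constructor <;> linarith
    rw [EuclideanSpace.norm_eq, ← Real.sqrt_sq (by linarith : 0 ≤ a),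
      ← Real.sqrt_mul (Nat.cast_nonneg d)]
    refine Real.sqrt_le_sqrt ?_
    calc ∑ i, ‖(latticePoint k - c) i‖ ^ 2 ≤ ∑ _i : Fin d, a ^ 2 :=
          Finset.sum_le_sum fun i _ => pow_le_pow_left₀ (norm_nonneg _) (hcoord i) 2
      _ = d * a ^ 2 := by simp

theorem exists_measurableSet_subset_near_lattice {d : ℕ} (ν : Measure (EuclideanSpace ℝ (Fin d)))
    [SFinite ν] {t η b : ℝ} (ht : 0 < t) (hη0 : 0 < η) (hη1 : η ≤ 1) (hsep : 8 * t * η < 1)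
    {x₀' u y₀ : EuclideanSpace ℝ (Fin d)} (hy₀ : ‖y₀‖ = 1) (K : Finset (Fin d → ℤ))
    (hK : ∀ k ∈ K, ‖latticePoint k - (x₀' - u)‖ ≤ t)
    (hν : ∀ y, ‖y‖ = 1 → ENNReal.ofReal b ≤ ν (closedBall y (2 * η))) :
    ∃ U : Set (ℝ × EuclideanSpace ℝ (Fin d)), MeasurableSet U ∧
      U ⊆ {p | ∃ k, ‖x₀' + jumpDisplacement t y₀ p - u - latticePoint k‖ ≤ 4 * t * η} ∧
      ENNReal.ofReal (K.card * (η * b)) ≤ ((volume.restrict (Icc (0 : ℝ) 1)).prod ν) U := by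
  choose! s hs y hy hsy using fun k hk => exists_jumpDisplacement_eq ht hy₀ (hK k hk)
  choose! a has haI using fun k hk => exists_Icc_subset_Icc_zero_one (hs k hk) hη0.le hη1
  set R : (Fin d → ℤ) → Set (ℝ × EuclideanSpace ℝ (Fin d)) :=
    fun k => Icc (a k) (a k + η) ×ˢ closedBall (y k) (2 * η)
  have hnear : ∀ k ∈ K, ∀ p ∈ R k,
      ‖x₀' + jumpDisplacement t y₀ p - u - latticePoint k‖ ≤ 4 * t * η := by
    rintro k hk p ⟨hp₁, hp₂⟩
    have hps : |p.1 - s k| ≤ η :=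
      abs_sub_le_iff.mpr ⟨by linarith [hp₁.2, (has k hk).1], by linarith [hp₁.1, (has k hk).2]⟩
    rw [show x₀' + jumpDisplacement t y₀ p - u - latticePoint k =
        jumpDisplacement t y₀ p - jumpDisplacement t y₀ (s k, y k) by rw [hsy k hk]; abel]
    calc _ ≤ t * (2 * |p.1 - s k| + ‖p.2 - y k‖) :=
          norm_jumpDisplacement_sub_le ht.le hy₀ (q := (s k, y k)) (haI k hk hp₁) (hy k hk)
      _ ≤ t * (2 * η + 2 * η) := by gcongr; rwa [← dist_eq_norm]
      _ = 4 * t * η := by ring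
  have hdisj : (K : Set (Fin d → ℤ)).PairwiseDisjoint R := by
    refine fun k hk k' hk' hne => Set.disjoint_left.mpr fun p hp hp' => ?_
    have := (one_le_norm_latticePoint_sub hne).trans
      (norm_sub_le_norm_sub_add_norm_sub _ (x₀' + jumpDisplacement t y₀ p - u) _)
    rw [norm_sub_rev] at this
    linarith [hnear k hk p hp, hnear k' hk' p hp']
  refine ⟨⋃ k ∈ K, R k,
    K.measurableSet_biUnion fun k _ => measurableSet_Icc.prod measurableSet_closedBall,
    iUnion₂_subset fun k hk p hp => ⟨k, hnear k hk p hp⟩, ?_⟩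
  rw [measure_biUnion_finset hdisj fun k _ => measurableSet_Icc.prod measurableSet_closedBall]
  calc ENNReal.ofReal (K.card * (η * b)) = ∑ _k ∈ K, ENNReal.ofReal η * ENNReal.ofReal b := by
        rw [Finset.sum_const, nsmul_eq_mul, ENNReal.ofReal_mul (Nat.cast_nonneg _),
          ENNReal.ofReal_natCast, ENNReal.ofReal_mul hη0.le]
    _ ≤ ∑ k ∈ K, ((volume.restrict (Icc (0 : ℝ) 1)).prod ν) (R k) :=
        Finset.sum_le_sum fun k hk => by
          rw [Measure.prod_prod, Measure.restrict_apply measurableSet_Icc,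
            inter_eq_left.mpr (haI k hk), Real.volume_Icc, add_sub_cancel_left]
          exact mul_le_mul_right (hν _ (hy k hk)) _

noncomputable def anticoncentrationConst (m : ℕ) : ℝ :=
  (8 * √((m + 1 : ℕ) : ℝ))⁻¹ ^ (m + 1) * (μH[m] (ball (0 : EuclideanSpace ℝ (Fin m)) 1)).toReal /
    (μH[m] (sphere (0 : EuclideanSpace ℝ (Fin (m + 1))) 1)).toReal

theorem anticoncentrationConst_pos (m : ℕ) : 0 < anticoncentrationConst m := by
  have hA := ENNReal.toReal_pos (measure_ball_pos μH[m] (0 : EuclideanSpace ℝ (Fin m)) one_pos).ne'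
    measure_ball_lt_top.ne
  have hMS := ENNReal.toReal_pos
    (hausdorffMeasure_sphere_pos (E := EuclideanSpace ℝ (Fin (m + 1))) (m := m)).ne'
    (hausdorffMeasure_sphere_lt_top (m := m)).ne
  unfold anticoncentrationConst
  positivity

theorem exists_measurableSet_near_lattice_anticoncentration {m : ℕ} {t δ : ℝ}
    (ht : √((m + 1 : ℕ) : ℝ) / 2 < t) (hδ : 0 < δ) (hδ1 : δ < 1)
    {x₀' u y₀ : EuclideanSpace ℝ (Fin (m + 1))} (hy₀ : ‖y₀‖ = 1) :
    ∃ U : Set (ℝ × EuclideanSpace ℝ (Fin (m + 1))), MeasurableSet U ∧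
      U ⊆ {p | ∃ k, ‖x₀' + jumpDisplacement t y₀ p - u - latticePoint k‖ ≤ δ} ∧
      ENNReal.ofReal (anticoncentrationConst m * δ ^ (m + 1)) ≤
        ((volume.restrict (Icc (0 : ℝ) 1)).prod μH[m][|sphere 0 1]) U := by
  set D := √((m + 1 : ℕ) : ℝ)
  have hD : 1 ≤ D := Real.one_le_sqrt.mpr (by simp)
  have ht0 : 0 < t := by linarith
  obtain ⟨K, hK, hKt⟩ := exists_finset_norm_latticePoint_sub_le (x₀' - u) (a := t / D)
    (by rw [lt_div_iff₀ (by positivity)]; linarith)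
  rw [mul_div_cancel₀ _ (by positivity : D ≠ 0)] at hKt
  set η := δ / (8 * t)
  have hη0 : 0 < η := by positivity
  have hη1 : η ≤ 1 := by rw [div_le_one (by positivity)]; linarith
  have hsep : 8 * t * η = δ := by simp only [η]; field_simp
  obtain ⟨U, hU, hUsub, hUle⟩ := exists_measurableSet_subset_near_lattice _ ht0 hη0 hη1
    (by linarith) hy₀ K hKt fun y hy => ofReal_le_cond_sphere_closedBall (m := m) hy hη0 hη1
  refine ⟨U, hU, hUsub.trans fun p ⟨k, hk⟩ => ⟨k, hk.trans (by linarith)⟩,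
    le_trans (ENNReal.ofReal_le_ofReal ?_) hUle⟩
  have hη : t / D * η = (8 * D)⁻¹ * δ := by simp only [η]; field_simp
  set A := (μH[m] (ball (0 : EuclideanSpace ℝ (Fin m)) 1)).toReal
  set MS := (μH[m] (sphere (0 : EuclideanSpace ℝ (Fin (m + 1))) 1)).toReal
  calc anticoncentrationConst m * δ ^ (m + 1) = ((8 * D)⁻¹ * δ) ^ (m + 1) * A / MS := by
        rw [anticoncentrationConst]; ring
    _ = (t / D) ^ (m + 1) * (η * (η ^ m * A / MS)) := by rw [← hη]; ring
    _ ≤ _ := mul_le_mul_of_nonneg_right hK (by positivity)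

/-- Anticoncentration step of Lemma 5.2: let `S` be uniform on `[0,1]` and `Y` uniform on
the sphere `𝕊^{d-1}`, independent; for `t > √d/2`, any starting point `x₀'` and direction
`y₀ ∈ 𝕊^{d-1}`, there is `c₂ > 0` depending only on `d` such that for every `u` and every
`δ ∈ (0,1)`, the point `x₀' + tS y₀ + t(1-S) Y` lies within torus distance `δ` of `u`
(i.e. within `δ` of some integer translate of `u`) with probability at least `c₂ δ^d`. -/
theorem stmt18 (d : ℕ) (hd : 1 ≤ d) :
    ∃ c₂ > (0:ℝ),
      ∀ (Ω : Type) (_ : MeasureSpace Ω) (_ : IsProbabilityMeasure (ℙ : Measure Ω))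
        (S : Ω → ℝ) (Y : Ω → EuclideanSpace ℝ (Fin d)),
        Measure.map S ℙ = volume.restrict (Set.Icc (0:ℝ) 1) →
        Measure.map Y ℙ =
          (μH[(d - 1 : ℕ)] (Metric.sphere (0 : EuclideanSpace ℝ (Fin d)) 1))⁻¹ •
            (μH[(d - 1 : ℕ)]).restrict (Metric.sphere (0 : EuclideanSpace ℝ (Fin d)) 1) →
        IndepFun S Y →
        ∀ t : ℝ, Real.sqrt d / 2 < t →
        ∀ x₀' u y₀ : EuclideanSpace ℝ (Fin d), ‖y₀‖ = 1 →
        ∀ δ : ℝ, 0 < δ → δ < 1 →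
          ENNReal.ofReal (c₂ * δ ^ d) ≤
            ℙ {ω | ∃ k : Fin d → ℤ,
              ‖x₀' + (t * S ω) • y₀ + (t * (1 - S ω)) • Y ω - u -
                  (show EuclideanSpace ℝ (Fin d) from WithLp.toLp 2 (fun i => (k i : ℝ)))‖ ≤ δ} := by
  obtain ⟨m, rfl⟩ : ∃ m, d = m + 1 := ⟨d - 1, by omega⟩
  refine ⟨anticoncentrationConst m, anticoncentrationConst_pos m, ?_⟩
  intro Ω _ _ S Y hS hY hSY t ht x₀' u y₀ hy₀ δ hδ hδ1
  replace hY : Measure.map Y ℙ = μH[m][|sphere (0 : EuclideanSpace ℝ (Fin (m + 1))) 1] := by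
    rw [ProbabilityTheory.cond]; simpa using hY
  have hSm : AEMeasurable S := .of_map_ne_zero (by simp [hS])
  have hYm : AEMeasurable Y := .of_map_ne_zero (by rw [hY]; exact IsProbabilityMeasure.ne_zero _)
  obtain ⟨U, hU, hUsub, hUle⟩ :=
    exists_measurableSet_near_lattice_anticoncentration (u := u) (x₀' := x₀') ht hδ hδ1 hy₀
  calc _ ≤ ((volume.restrict (Icc (0 : ℝ) 1)).prod μH[m][|sphere 0 1]) U := hUle
    _ = ℙ ((fun ω => (S ω, Y ω)) ⁻¹' U) := by
        rw [← hS, ← hY, ← hSY.map_prod_eq_prod_map_map hSm hYm,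
          Measure.map_apply_of_aemeasurable (hSm.prodMk hYm) hU]
    _ ≤ _ := measure_mono fun ω hω => by
        obtain ⟨k, hk⟩ := hUsub hω
        exact ⟨k, by rwa [jumpDisplacement, ← add_assoc] at hk⟩
end
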